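/- arXiv:1904.03572 — 4 statements merged into one kernel-verified Lean document; each statement's English description precedes it below -/
import Mathlib

section
/- Let U ⊆ C^{l1}×...×C^{ln} be open and K ⊆ U compact. If the C^n-holomorphically convex hull K̂ of K in U is not compact, then there exists a point b in the complement of U whose distance to K̂ is zero, i.e., inf_{a∈K̂} |a − b| = 0. -/
/-
The coordinate functions `z ↦ Pi.single j (z j k)` are `ℂⁿ`-holomorphic, so every point of the
hull has coordinates bounded by those of `K`: the hull is bounded and its closure compact. A hull
that is not compact is therefore not closed, and a point of its closure outside it cannot lie in
`U`, because on `U` the defining inequalities pass to limits by continuity.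
-/

open Set Metric

/-- `f : ℂ^{l 0} × ... × ℂ^{l (n-1)} → ℂ^n` is `ℂⁿ`-holomorphic on `U`:
holomorphic, and for `i ≠ j` the partial derivative of the `i`-th component
in every direction of the `j`-th coordinate block vanishes. -/
def CnHolo {n : ℕ} {l : Fin n → ℕ} (U : Set (∀ j, Fin (l j) → ℂ))
    (f : (∀ j, Fin (l j) → ℂ) → (Fin n → ℂ)) : Prop :=
  DifferentiableOn ℂ f U ∧
    ∀ a ∈ U, ∀ i j : Fin n, i ≠ j → ∀ v : Fin (l j) → ℂ,
      fderiv ℂ (fun z => f z i) a (Pi.single j v) = 0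

/-- The `ℂⁿ`-holomorphically convex hull of `K` in `U` (sup-norms throughout). -/
def cnHull {n : ℕ} {l : Fin n → ℕ} (U K : Set (∀ j, Fin (l j) → ℂ)) :
    Set (∀ j, Fin (l j) → ℂ) :=
  {z ∈ U | ∀ f, CnHolo U f → ‖f z‖ ≤ sSup ((fun w => ‖f w‖) '' K)}

variable {n : ℕ} {l : Fin n → ℕ}

lemma CnHolo.of_continuousLinearMap (U : Set (∀ j, Fin (l j) → ℂ))
    (L : (∀ j, Fin (l j) → ℂ) →L[ℂ] (Fin n → ℂ))
    (hL : ∀ i j : Fin n, i ≠ j → ∀ v : Fin (l j) → ℂ, L (Pi.single j v) i = 0) :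
    CnHolo U L := by
  refine ⟨L.differentiable.differentiableOn, fun a _ i j hij v => ?_⟩
  change fderiv ℂ ((ContinuousLinearMap.proj i).comp L) a _ = 0
  rw [ContinuousLinearMap.fderiv]
  exact hL i j hij v

lemma cnHolo_single_coord (U : Set (∀ j, Fin (l j) → ℂ)) (j : Fin n) (k : Fin (l j)) :
    CnHolo U fun z => Pi.single j (z j k) := by
  refine CnHolo.of_continuousLinearMap U
    ((ContinuousLinearMap.single ℂ (fun _ => ℂ) j).comp <| (ContinuousLinearMap.proj k).comp <|
      ContinuousLinearMap.proj (R := ℂ) (φ := fun j => Fin (l j) → ℂ) j)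
    fun i j' hij v => ?_
  by_cases hi : i = j
  · subst hi
    simp [Pi.single_eq_of_ne hij]
  · simp [Pi.single_eq_of_ne hi]

lemma cnHull_subset_closedBall {U K : Set (∀ j, Fin (l j) → ℂ)} {C : ℝ} (hC₀ : 0 ≤ C)
    (hC : ∀ w ∈ K, ‖w‖ ≤ C) : cnHull U K ⊆ closedBall 0 C := by
  intro z hz
  rw [mem_closedBall_zero_iff, pi_norm_le_iff_of_nonneg hC₀]
  intro j
  rw [pi_norm_le_iff_of_nonneg hC₀]
  intro k
  have hnorm (w : ∀ j, Fin (l j) → ℂ) :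
      ‖Pi.single (M := fun _ => ℂ) j (w j k)‖ = ‖w j k‖ :=
    Pi.norm_single _
  have hsSup : sSup ((fun w => ‖Pi.single (M := fun _ => ℂ) j (w j k)‖) '' K) ≤ C := by
    refine Real.sSup_le ?_ hC₀
    rintro _ ⟨w, hw, rfl⟩
    calc ‖Pi.single (M := fun _ => ℂ) j (w j k)‖ = ‖w j k‖ := hnorm w
      _ ≤ ‖w‖ := (norm_le_pi_norm (w j) k).trans (norm_le_pi_norm w j)
      _ ≤ C := hC w hw
  calc ‖z j k‖ = ‖Pi.single (M := fun _ => ℂ) j (z j k)‖ := (hnorm z).symm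
    _ ≤ C := (hz.2 _ (cnHolo_single_coord U j k)).trans hsSup

lemma isBounded_cnHull {U K : Set (∀ j, Fin (l j) → ℂ)} (hK : Bornology.IsBounded K) :
    Bornology.IsBounded (cnHull U K) := by
  obtain ⟨C, hC₀, hC⟩ := hK.exists_pos_norm_le
  exact isBounded_closedBall.subset (cnHull_subset_closedBall hC₀.le hC)

lemma closure_cnHull_inter_subset (U K : Set (∀ j, Fin (l j) → ℂ)) :
    closure (cnHull U K) ∩ U ⊆ cnHull U K := by
  rintro b ⟨hb, hbU⟩
  refine ⟨hbU, fun f hf => ?_⟩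
  have hcont : ContinuousWithinAt (fun z => ‖f z‖) (cnHull U K) b :=
    ((hf.1.continuousOn b hbU).mono fun _ hz => hz.1).norm
  exact hcont.closure_le hb continuousWithinAt_const fun z hz => hz.2 f hf

theorem cnHull_not_compact_exists_boundary_general {n : ℕ} {l : Fin n → ℕ}
    (U K : Set (∀ j, Fin (l j) → ℂ)) (hK : IsCompact K) (h : ¬ IsCompact (cnHull U K)) :
    ∃ b, b ∉ U ∧ Metric.infDist b (cnHull U K) = 0 := by
  have hclosure : IsCompact (closure (cnHull U K)) :=
    (isBounded_cnHull hK.isBounded).isCompact_closure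
  obtain ⟨b, hb, hbHull⟩ : ∃ b ∈ closure (cnHull U K), b ∉ cnHull U K := by
    by_contra! hsub
    exact h (Subset.antisymm hsub subset_closure ▸ hclosure)
  exact ⟨b, fun hbU => hbHull (closure_cnHull_inter_subset U K ⟨hb, hbU⟩),
    infDist_zero_of_mem_closure hb⟩

/-- If the `ℂⁿ`-holomorphically convex hull of a compact `K ⊆ U` is not
compact, then some point outside `U` is at distance zero from the hull. -/
theorem cnHull_not_compact_exists_boundary {n : ℕ} {l : Fin n → ℕ}
    (U K : Set (∀ j, Fin (l j) → ℂ)) (hU : IsOpen U)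
    (hKU : K ⊆ U) (hK : IsCompact K) (h : ¬ IsCompact (cnHull U K)) :
    ∃ b, b ∉ U ∧ Metric.infDist b (cnHull U K) = 0 :=
  cnHull_not_compact_exists_boundary_general U K hK h
end

section
/- Let U ⊊ C^{l1}×...×C^{ln} be a C^n-holomorphically convex open set, and let {a_k} be a sequence in U. For each k, set B_k := { z ∈ U : |a_k − z| < dist(a_k, complement of U) } (sup-norm distance). Then there exists f ∈ O_{l1,...,ln}(U) such that sup_{z∈B_k} |f(z)| = +∞ for every k. -/
open Set Metric

/-- `U` is `ℂⁿ`-holomorphically convex. -/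
def IsCnHoloConvex {n : ℕ} {l : Fin n → ℕ}
    (U : Set (∀ j, Fin (l j) → ℂ)) : Prop :=
  ∀ K ⊆ U, IsCompact K → IsCompact (cnHull U K)

/-!
Cartan–Thullen's construction. At stage `m` let `L` be the compact subset of `U` built so far.
Its `ℂⁿ`-hull is compact, hence closed, while the closure of each ball `B k` reaches `∂U`; so the
ball served at stage `m` contains a point `z` outside the hull. A high componentwise power of a
`ℂⁿ`-holomorphic function separating `z` from `L` is a term `F` with `‖F‖ ≤ 2⁻ᵐ` on `L` and
`‖F z‖ ≥ m + 2 + ‖∑_{p<m} F_p z‖`. Adding `z` and a piece of a compact exhaustion of `U` to `L`,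
the series `∑ F_m` converges locally uniformly on `U`; by Cauchy estimates the derivatives converge
too, so the sum is `ℂⁿ`-holomorphic, and it exceeds `m + 1` at the `m`-th point.
-/

open Filter Topology

section Weierstrass

variable {E F : Type*} [NormedAddCommGroup E] [NormedSpace ℂ E]
  [NormedAddCommGroup F] [NormedSpace ℂ F]

theorem norm_fderiv_le_of_forall_mem_ball_norm_le {f : E → F} {c : E} {R M : ℝ}
    (hd : DifferentiableOn ℂ f (ball c R)) (hR : 0 < R) (hM : ∀ z ∈ ball c R, ‖f z‖ ≤ M) :
    ‖fderiv ℂ f c‖ ≤ 2 * M / R := by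
  refine Complex.norm_fderiv_le_div_of_mapsTo_ball hd (fun z hz => ?_) hR
  rw [mem_closedBall, dist_eq_norm, two_mul]
  exact (norm_sub_le _ _).trans (add_le_add (hM z hz) (hM c (mem_ball_self hR)))

theorem uniformCauchySeqOn_fderiv_of_tendstoUniformlyOn {G : ℕ → E → F} {g : E → F}
    {c : E} {r : ℝ} (hr : 0 < r) (hd : ∀ m, DifferentiableOn ℂ (G m) (ball c (2 * r)))
    (hG : TendstoUniformlyOn G g atTop (ball c (2 * r))) :
    UniformCauchySeqOn (fun m => fderiv ℂ (G m)) atTop (ball c r) := by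
  rw [Metric.uniformCauchySeqOn_iff]
  intro ε hε
  obtain ⟨N, hN⟩ := Metric.uniformCauchySeqOn_iff.mp hG.uniformCauchySeqOn (ε * r / 4)
    (by positivity)
  refine ⟨N, fun m hm p hp x hx => ?_⟩
  have hsub : ball x r ⊆ ball c (2 * r) := ball_subset_ball' (by
    rw [mem_ball] at hx; linarith)
  have hdiff : DifferentiableOn ℂ (G m - G p) (ball x r) := ((hd m).sub (hd p)).mono hsub
  have hbound : ∀ y ∈ ball x r, ‖(G m - G p) y‖ ≤ ε * r / 4 := fun y hy =>
    (dist_eq_norm (G m y) (G p y) ▸ hN m hm p hp y (hsub hy)).le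
  have hnhds : ball c (2 * r) ∈ 𝓝 x := isOpen_ball.mem_nhds (hsub (mem_ball_self hr))
  calc dist (fderiv ℂ (G m) x) (fderiv ℂ (G p) x)
      = ‖fderiv ℂ (G m - G p) x‖ := by
        rw [dist_eq_norm, fderiv_sub ((hd m).differentiableAt hnhds)
          ((hd p).differentiableAt hnhds)]
    _ ≤ 2 * (ε * r / 4) / r := norm_fderiv_le_of_forall_mem_ball_norm_le hdiff hr hbound
    _ < ε := by field_simp; linarith

theorem TendstoLocallyUniformlyOn.differentiableAt_and_tendsto_fderiv [ProperSpace E]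
    [CompleteSpace F] {U : Set E} (hU : IsOpen U) {G : ℕ → E → F} {g : E → F}
    (hd : ∀ m, DifferentiableOn ℂ (G m) U) (hG : TendstoLocallyUniformlyOn G g atTop U)
    {x : E} (hx : x ∈ U) :
    DifferentiableAt ℂ g x ∧ Tendsto (fun m => fderiv ℂ (G m) x) atTop (𝓝 (fderiv ℂ g x)) := by
  obtain ⟨ε, hε, hball⟩ := Metric.isOpen_iff.mp hU x hx
  obtain ⟨r, hr, hrε⟩ : ∃ r, 0 < r ∧ 2 * r < ε := ⟨ε / 3, by positivity, by linarith⟩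
  have hclosed : closedBall x (2 * r) ⊆ U := (closedBall_subset_ball hrε).trans hball
  have hopen : ball x (2 * r) ⊆ U := ball_subset_closedBall.trans hclosed
  have hGu : TendstoUniformlyOn G g atTop (ball x (2 * r)) :=
    ((tendstoLocallyUniformlyOn_iff_forall_isCompact hU).mp hG _ hclosed
      (isCompact_closedBall _ _)).mono ball_subset_closedBall
  have hcauchy := uniformCauchySeqOn_fderiv_of_tendstoUniformlyOn hr
    (fun m => (hd m).mono hopen) hGu
  set g' := fun y => limUnder atTop fun m => fderiv ℂ (G m) y
  have hg' : ∀ y ∈ ball x r, Tendsto (fun m => fderiv ℂ (G m) y) atTop (𝓝 (g' y)) :=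
    fun y hy => (hcauchy.cauchySeq hy).tendsto_limUnder
  have hsmall : ball x r ⊆ U := (ball_subset_ball (by linarith)).trans hopen
  have hderiv : HasFDerivAt g (g' x) x :=
    hasFDerivAt_of_tendstoUniformlyOn isOpen_ball
      (hcauchy.tendstoUniformlyOn_of_tendsto hg')
      (fun m y hy => ((hd m).differentiableAt (hU.mem_nhds (hsmall hy))).hasFDerivAt)
      (fun y hy => hG.tendsto_at (hsmall hy)) (mem_ball_self hr)
  exact ⟨hderiv.differentiableAt, hderiv.fderiv ▸ hg' x (mem_ball_self hr)⟩

end Weierstrass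

namespace CnHolo

variable {n : ℕ} {l : Fin n → ℕ} {U : Set (∀ j, Fin (l j) → ℂ)}

theorem fderiv_apply_single_eq_zero (hU : IsOpen U)
    {f : (∀ j, Fin (l j) → ℂ) → (Fin n → ℂ)} (hf : CnHolo U f) {a : ∀ j, Fin (l j) → ℂ}
    (ha : a ∈ U) {i j : Fin n} (hij : i ≠ j) (v : Fin (l j) → ℂ) :
    fderiv ℂ f a (Pi.single j v) i = 0 := by
  simpa [fderiv_apply (hf.1.differentiableAt (hU.mem_nhds ha)) i] using hf.2 a ha i j hij v

theorem zero : CnHolo U 0 :=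
  ⟨differentiableOn_const 0, fun _ _ _ _ _ _ => by simp⟩

theorem add (hU : IsOpen U) {f g : (∀ j, Fin (l j) → ℂ) → (Fin n → ℂ)} (hf : CnHolo U f)
    (hg : CnHolo U g) : CnHolo U (f + g) := by
  refine ⟨hf.1.add hg.1, fun a ha i j hij v => ?_⟩
  have hdiff {h : (∀ j, Fin (l j) → ℂ) → (Fin n → ℂ)} (hh : CnHolo U h) :
      DifferentiableAt ℂ (fun z => h z i) a :=
    differentiableAt_pi.mp (hh.1.differentiableAt (hU.mem_nhds ha)) i
  simp [fderiv_fun_add (hdiff hf) (hdiff hg), hf.2 a ha i j hij v, hg.2 a ha i j hij v]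

theorem sum (hU : IsOpen U) {ι : Type*} (s : Finset ι)
    {f : ι → (∀ j, Fin (l j) → ℂ) → (Fin n → ℂ)} (hf : ∀ i ∈ s, CnHolo U (f i)) :
    CnHolo U (∑ i ∈ s, f i) :=
  Finset.sum_induction f (CnHolo U) (fun _ _ => add hU) zero hf

theorem comp_apply (hU : IsOpen U) {f : (∀ j, Fin (l j) → ℂ) → (Fin n → ℂ)} (hf : CnHolo U f)
    {φ : ℂ → ℂ} (hφ : Differentiable ℂ φ) : CnHolo U (fun z i => φ (f z i)) := by
  have hcomp : ∀ a ∈ U, ∀ i, DifferentiableAt ℂ (fun z => f z i) a := fun a ha =>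
    differentiableAt_pi.mp (hf.1.differentiableAt (hU.mem_nhds ha))
  refine ⟨fun a ha => (differentiableAt_pi.mpr fun i =>
    (hφ _).comp a (hcomp a ha i)).differentiableWithinAt, fun a ha i j hij v => ?_⟩
  rw [fderiv_fun_comp a (hφ _) (hcomp a ha i), ContinuousLinearMap.comp_apply,
    hf.2 a ha i j hij v, map_zero]

theorem of_tendstoLocallyUniformlyOn (hU : IsOpen U)
    {G : ℕ → (∀ j, Fin (l j) → ℂ) → (Fin n → ℂ)} {g : (∀ j, Fin (l j) → ℂ) → (Fin n → ℂ)}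
    (hG : ∀ m, CnHolo U (G m)) (hlim : TendstoLocallyUniformlyOn G g atTop U) :
    CnHolo U g := by
  have key := fun a (ha : a ∈ U) =>
    hlim.differentiableAt_and_tendsto_fderiv hU (fun m => (hG m).1) ha
  refine ⟨fun a ha => (key a ha).1.differentiableWithinAt, fun a ha i j hij v => ?_⟩
  have hpartial : Tendsto (fun m => fderiv ℂ (G m) a (Pi.single j v) i) atTop
      (𝓝 (fderiv ℂ g a (Pi.single j v) i)) :=
    ((continuous_apply i).comp (ContinuousLinearMap.apply ℂ (Fin n → ℂ)
      (Pi.single j v : ∀ j, Fin (l j) → ℂ)).continuous |>.tendsto _).comp (key a ha).2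
  simp only [fun m => (hG m).fderiv_apply_single_eq_zero hU ha hij v] at hpartial
  rw [fderiv_apply (key a ha).1 i]
  exact tendsto_nhds_unique hpartial tendsto_const_nhds

end CnHolo

theorem exists_cnHolo_of_notMem_cnHull {n : ℕ} {l : Fin n → ℕ}
    {U C : Set (∀ j, Fin (l j) → ℂ)} (hU : IsOpen U) (hC : IsCompact C) (hCU : C ⊆ U)
    {z : ∀ j, Fin (l j) → ℂ} (hz : z ∈ U) (hzC : z ∉ cnHull U C) {ε : ℝ} (hε : 0 < ε)
    (M : ℝ) : ∃ F, CnHolo U F ∧ (∀ w ∈ C, ‖F w‖ ≤ ε) ∧ M ≤ ‖F z‖ := by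
  obtain ⟨f, hf, hfz⟩ : ∃ f, CnHolo U f ∧ sSup ((fun w => ‖f w‖) '' C) < ‖f z‖ := by
    simpa [cnHull, hz] using hzC
  set s := sSup ((fun w => ‖f w‖) '' C)
  have hbdd : BddAbove ((fun w => ‖f w‖) '' C) :=
    (hC.image_of_continuousOn (hf.1.continuousOn.mono hCU).norm).bddAbove
  have hle : ∀ w ∈ C, ‖f w‖ ≤ s := fun w hw => le_csSup hbdd ⟨w, hw, rfl⟩
  have hs : 0 ≤ s := Real.sSup_nonneg (by rintro _ ⟨w, -, rfl⟩; positivity)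
  obtain ⟨i, hi⟩ : ∃ i, s < ‖f z i‖ := by
    by_contra! h
    exact hfz.not_ge ((pi_norm_le_iff_of_nonneg hs).mpr h)
  obtain ⟨d, hsd, hdz⟩ := exists_between hi
  have hd : 0 < d := hs.trans_lt hsd
  obtain ⟨N, hNε, hNM⟩ : ∃ N : ℕ, (s / d) ^ N ≤ ε ∧ M ≤ (‖f z i‖ / d) ^ N :=
    ((tendsto_pow_atTop_nhds_zero_of_lt_one (by positivity) ((div_lt_one hd).mpr hsd)
      |>.eventually_le_const hε).and
    ((tendsto_pow_atTop_atTop_of_one_lt ((one_lt_div hd).mpr hdz)).eventually_ge_atTop M)).exists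
  have hnorm : ∀ w k, ‖(f w k / d) ^ N‖ = (‖f w k‖ / d) ^ N := by
    simp [abs_of_pos hd]
  refine ⟨fun w k => (f w k / d) ^ N,
    hf.comp_apply hU ((differentiable_id.div_const _).pow N), fun w hw => ?_, ?_⟩
  · refine (pi_norm_le_iff_of_nonneg hε.le).mpr fun k => ?_
    rw [hnorm]
    refine (pow_le_pow_left₀ (by positivity) ?_ N).trans hNε
    exact div_le_div_of_nonneg_right ((norm_le_pi_norm _ k).trans (hle w hw)) hd.le
  · exact hNM.trans ((hnorm z i).symm ▸ norm_le_pi_norm (fun k => (f z k / d) ^ N) i)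

section MetricLemmas

variable {E : Type*} [NormedAddCommGroup E]

theorem mem_of_dist_lt_infDist_compl {s : Set E} {x y : E} (h : dist x y < infDist x sᶜ) :
    y ∈ s :=
  not_not.mp (notMem_of_dist_lt_infDist h)

theorem exists_dist_lt_infDist_compl_notMem [NormedSpace ℝ E] [ProperSpace E] {U C : Set E}
    (hU : IsOpen U) (hne : Uᶜ.Nonempty) {a : E} (ha : a ∈ U) (hC : IsClosed C) (hCU : C ⊆ U) :
    ∃ z, dist a z < infDist a Uᶜ ∧ z ∉ C := by
  by_contra! h
  have hr : 0 < infDist a Uᶜ :=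
    (hU.isClosed_compl.notMem_iff_infDist_pos hne).mp (not_not_intro ha)
  obtain ⟨b, hb, hab⟩ := hU.isClosed_compl.exists_infDist_eq_dist hne a
  have hball : closedBall a (infDist a Uᶜ) ⊆ C := by
    rw [← closure_ball a hr.ne']
    exact hC.closure_subset_iff.mpr fun z hz => h z (by rwa [mem_ball, dist_comm] at hz)
  exact hb (hCU (hball (by rw [mem_closedBall, dist_comm, hab])))

def exhaustingSet (U : Set E) (m : ℕ) : Set E :=
  {z | ‖z‖ ≤ m ∧ ((m : ℝ) + 1)⁻¹ ≤ infDist z Uᶜ}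

theorem isCompact_exhaustingSet [ProperSpace E] (U : Set E) (m : ℕ) :
    IsCompact (exhaustingSet U m) :=
  (isCompact_closedBall 0 (m : ℝ)).of_isClosed_subset
    ((isClosed_le continuous_norm continuous_const).inter
      (isClosed_le continuous_const (continuous_infDist_pt _)))
    fun _ hz => mem_closedBall_zero_iff.mpr hz.1

theorem exhaustingSet_subset (U : Set E) (m : ℕ) : exhaustingSet U m ⊆ U := by
  intro z hz
  by_contra hzU
  have := hz.2
  rw [infDist_zero_of_mem hzU] at this
  exact this.not_gt (by positivity)

theorem exists_exhaustingSet_mem_nhds {U : Set E} (hU : IsOpen U) (hne : Uᶜ.Nonempty) {x : E}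
    (hx : x ∈ U) : ∃ m, exhaustingSet U m ∈ 𝓝 x := by
  have hr : 0 < infDist x Uᶜ :=
    (hU.isClosed_compl.notMem_iff_infDist_pos hne).mp (not_not_intro hx)
  obtain ⟨m, hm⟩ := exists_nat_gt (max ‖x‖ (infDist x Uᶜ)⁻¹)
  rw [max_lt_iff] at hm
  have hopen : IsOpen {z : E | ‖z‖ < m ∧ ((m : ℝ) + 1)⁻¹ < infDist z Uᶜ} :=
    (isOpen_lt continuous_norm continuous_const).inter
      (isOpen_lt continuous_const (continuous_infDist_pt _))
  refine ⟨m, mem_of_superset (hopen.mem_nhds ⟨hm.1, ?_⟩) fun z hz => ⟨hz.1.le, hz.2.le⟩⟩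
  exact inv_lt_of_inv_lt₀ hr (hm.2.trans (lt_add_one _))

end MetricLemmas

theorem norm_tsum_sub_sum_range_le {V : Type*} [NormedAddCommGroup V] [CompleteSpace V]
    {F : ℕ → V} {m : ℕ} (hF : ∀ p ≥ m, ‖F p‖ ≤ 2⁻¹ ^ p) :
    ‖∑' p, F p - ∑ p ∈ Finset.range m, F p‖ ≤ 2 * 2⁻¹ ^ m := by
  have hgeom : HasSum (fun p : ℕ => (2 : ℝ)⁻¹ ^ p) 2 := by
    simpa [one_div] using hasSum_geometric_two
  have hsum : Summable F := Summable.of_norm_bounded_eventually_nat hgeom.summable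
    (eventually_atTop.mpr ⟨m, hF⟩)
  rw [← hsum.sum_add_tsum_nat_add m, add_sub_cancel_left]
  refine (tsum_of_norm_bounded (hgeom.mul_left (2⁻¹ ^ m)) fun p => ?_).trans_eq (mul_comm _ _)
  exact (hF (p + m) (Nat.le_add_left m p)).trans_eq (by rw [pow_add, mul_comm])

section Construction

variable {n : ℕ} {l : Fin n → ℕ} (U : Set (∀ j, Fin (l j) → ℂ)) (a : ℕ → ∀ j, Fin (l j) → ℂ)

/-- Through `Nat.unpair`, every ball comes up at infinitely many stages `m`. -/
def IsCartanStep (m : ℕ) (L : Set (∀ j, Fin (l j) → ℂ)) (S : (∀ j, Fin (l j) → ℂ) → Fin n → ℂ)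
    (t : (∀ j, Fin (l j) → ℂ) × ((∀ j, Fin (l j) → ℂ) → Fin n → ℂ)) : Prop :=
  dist (a (Nat.unpair m).1) t.1 < infDist (a (Nat.unpair m).1) Uᶜ ∧ CnHolo U t.2 ∧
    (∀ w ∈ L, ‖t.2 w‖ ≤ 2⁻¹ ^ m) ∧ m + 2 + ‖S t.1‖ ≤ ‖t.2 t.1‖

noncomputable def cartanStep (m : ℕ)
    (s : Set (∀ j, Fin (l j) → ℂ) × ((∀ j, Fin (l j) → ℂ) → Fin n → ℂ)) :
    (∀ j, Fin (l j) → ℂ) × ((∀ j, Fin (l j) → ℂ) → Fin n → ℂ) :=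
  Classical.epsilon (IsCartanStep U a m s.1 s.2)

noncomputable def cartanStage :
    ℕ → Set (∀ j, Fin (l j) → ℂ) × ((∀ j, Fin (l j) → ℂ) → Fin n → ℂ)
  | 0 => (∅, 0)
  | m + 1 =>
    let t := cartanStep U a m (cartanStage m)
    ((cartanStage m).1 ∪ insert t.1 (exhaustingSet U m), (cartanStage m).2 + t.2)

noncomputable def cartanPoint (m : ℕ) : ∀ j, Fin (l j) → ℂ :=
  (cartanStep U a m (cartanStage U a m)).1

noncomputable def cartanTerm (m : ℕ) : (∀ j, Fin (l j) → ℂ) → Fin n → ℂ :=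
  (cartanStep U a m (cartanStage U a m)).2

variable {U a}

theorem exists_isCartanStep (hU : IsOpen U) (hne : Uᶜ.Nonempty) (hconv : IsCnHoloConvex U)
    (ha : ∀ k, a k ∈ U) (m : ℕ) {L : Set (∀ j, Fin (l j) → ℂ)} (hL : IsCompact L)
    (hLU : L ⊆ U) (S : (∀ j, Fin (l j) → ℂ) → Fin n → ℂ) : ∃ t, IsCartanStep U a m L S t := by
  obtain ⟨z, hdist, hz⟩ := exists_dist_lt_infDist_compl_notMem hU hne (ha (Nat.unpair m).1)
    (hconv L hLU hL).isClosed fun _ hw => hw.1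
  obtain ⟨F, hF, hFL, hFz⟩ := exists_cnHolo_of_notMem_cnHull hU hL hLU
    (mem_of_dist_lt_infDist_compl hdist) hz (ε := 2⁻¹ ^ m) (by positivity)
    (m + 2 + ‖S z‖)
  exact ⟨(z, F), hdist, hF, hFL, hFz⟩

theorem cartanStage_fst_isCompact_subset (hU : IsOpen U) (hne : Uᶜ.Nonempty)
    (hconv : IsCnHoloConvex U) (ha : ∀ k, a k ∈ U) (m : ℕ) :
    IsCompact (cartanStage U a m).1 ∧ (cartanStage U a m).1 ⊆ U := by
  induction m with
  | zero => exact ⟨isCompact_empty, empty_subset U⟩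
  | succ m ih =>
    have hstep := Classical.epsilon_spec
      (exists_isCartanStep hU hne hconv ha m ih.1 ih.2 (cartanStage U a m).2)
    exact ⟨ih.1.union ((isCompact_exhaustingSet U m).insert _), union_subset ih.2
      (insert_subset (mem_of_dist_lt_infDist_compl hstep.1) (exhaustingSet_subset U m))⟩

theorem isCartanStep_cartanStep (hU : IsOpen U) (hne : Uᶜ.Nonempty) (hconv : IsCnHoloConvex U)
    (ha : ∀ k, a k ∈ U) (m : ℕ) :
    IsCartanStep U a m (cartanStage U a m).1 (cartanStage U a m).2
      (cartanPoint U a m, cartanTerm U a m) :=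
  have hL := cartanStage_fst_isCompact_subset hU hne hconv ha m
  Classical.epsilon_spec (exists_isCartanStep hU hne hconv ha m hL.1 hL.2 _)

theorem cartanStage_snd (m : ℕ) :
    (cartanStage U a m).2 = ∑ p ∈ Finset.range m, cartanTerm U a p := by
  induction m with
  | zero => rfl
  | succ m ih => rw [Finset.sum_range_succ, ← ih]; rfl

theorem monotone_cartanStage_fst : Monotone fun m => (cartanStage U a m).1 :=
  monotone_nat_of_le_succ fun _ => subset_union_left

theorem cartanPoint_mem_cartanStage {p m : ℕ} (hpm : p < m) :
    cartanPoint U a p ∈ (cartanStage U a m).1 :=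
  monotone_cartanStage_fst hpm (subset_union_right (mem_insert _ _))

theorem exhaustingSet_subset_cartanStage {p m : ℕ} (hpm : p < m) :
    exhaustingSet U p ⊆ (cartanStage U a m).1 :=
  (subset_union_right.trans' (subset_insert _ _)).trans (monotone_cartanStage_fst hpm)

end Construction

section CartanSeries

variable {n : ℕ} {l : Fin n → ℕ} {U : Set (∀ j, Fin (l j) → ℂ)} {a : ℕ → ∀ j, Fin (l j) → ℂ}

theorem cnHolo_tsum_cartanTerm (hU : IsOpen U) (hne : Uᶜ.Nonempty) (hconv : IsCnHoloConvex U)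
    (ha : ∀ k, a k ∈ U) : CnHolo U fun w => ∑' m, cartanTerm U a m w := by
  have hterm m := isCartanStep_cartanStep hU hne hconv ha m
  refine CnHolo.of_tendstoLocallyUniformlyOn hU
    (G := fun M w => ∑ p ∈ Finset.range M, cartanTerm U a p w) (fun M => ?_) ?_
  · simpa only [← Finset.sum_fn] using CnHolo.sum hU _ fun p _ => (hterm p).2.1
  intro u hu x hx
  obtain ⟨p, hp⟩ := exists_exhaustingSet_mem_nhds hU hne hx
  refine ⟨_, mem_nhdsWithin_of_mem_nhds hp, tendstoUniformlyOn_tsum_nat_eventually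
    (u := fun m => (2 : ℝ)⁻¹ ^ m) (summable_geometric_of_lt_one (by norm_num) (by norm_num))
    ?_ u hu⟩
  filter_upwards [eventually_gt_atTop p] with m hm w hw
  exact (hterm m).2.2.1 w (exhaustingSet_subset_cartanStage hm hw)

theorem le_norm_tsum_cartanTerm (hU : IsOpen U) (hne : Uᶜ.Nonempty) (hconv : IsCnHoloConvex U)
    (ha : ∀ k, a k ∈ U) (m : ℕ) :
    m + 1 ≤ ‖∑' p, cartanTerm U a p (cartanPoint U a m)‖ := by
  have hterm p := isCartanStep_cartanStep hU hne hconv ha p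
  set z := cartanPoint U a m
  have htail :
      ‖∑' p, cartanTerm U a p z - ∑ p ∈ Finset.range (m + 1), cartanTerm U a p z‖ ≤ 1 :=
    (norm_tsum_sub_sum_range_le fun p hp =>
      (hterm p).2.2.1 z (cartanPoint_mem_cartanStage hp)).trans (by
        rw [pow_succ', ← mul_assoc, mul_inv_cancel₀ two_ne_zero, one_mul]
        exact pow_le_one₀ (by norm_num) (by norm_num))
  set S := ∑ p ∈ Finset.range m, cartanTerm U a p z
  have hdom : m + 2 + ‖S‖ ≤ ‖cartanTerm U a m z‖ := by
    simpa [cartanStage_snd] using (hterm m).2.2.2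
  rw [Finset.sum_range_succ] at htail
  have hhead : ‖cartanTerm U a m z‖ ≤ ‖S + cartanTerm U a m z‖ + ‖S‖ := by
    simpa using norm_le_norm_add_norm_sub' (cartanTerm U a m z) (S + cartanTerm U a m z)
  linarith [norm_le_norm_add_norm_sub (∑' p, cartanTerm U a p z) (S + cartanTerm U a m z)]

end CartanSeries

/-- On a `ℂⁿ`-holomorphically convex proper open subset `U`, for any sequence
`a k` in `U` there is a `ℂⁿ`-holomorphic function unbounded on each of the
balls `B k = {z ∈ U | |a k - z| < dist (a k, Uᶜ)}`. -/
theorem cnHolo_unbounded_on_balls {n : ℕ} {l : Fin n → ℕ}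
    (U : Set (∀ j, Fin (l j) → ℂ)) (hU : IsOpen U) (hne : U ≠ Set.univ)
    (hconv : IsCnHoloConvex U)
    (a : ℕ → ∀ j, Fin (l j) → ℂ) (ha : ∀ k, a k ∈ U) :
    ∃ f, CnHolo U f ∧ ∀ k : ℕ,
      ¬ BddAbove ((fun z => ‖f z‖) ''
        {z ∈ U | dist (a k) z < Metric.infDist (a k) Uᶜ}) := by
  have hne' : Uᶜ.Nonempty := nonempty_compl.mpr hne
  refine ⟨_, cnHolo_tsum_cartanTerm hU hne' hconv ha, fun k => not_bddAbove_iff.mpr fun c => ?_⟩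
  set m := Nat.pair k ⌈c⌉₊
  have hdist : dist (a k) (cartanPoint U a m) < infDist (a k) Uᶜ := by
    simpa [m] using (isCartanStep_cartanStep hU hne' hconv ha m).1
  refine ⟨_, ⟨cartanPoint U a m, ⟨mem_of_dist_lt_infDist_compl hdist, hdist⟩, rfl⟩, ?_⟩
  calc c ≤ m := (Nat.le_ceil c).trans (by exact_mod_cast Nat.right_le_pair k ⌈c⌉₊)
    _ < m + 1 := lt_add_one _
    _ ≤ _ := le_norm_tsum_cartanTerm hU hne' hconv ha m
end

section
/- Let U_j be nonempty connected open subsets of C^{l_j} for j = 1,...,n, and set U := U_1 × ... × U_n. Then O_{l1,...,ln}(U) = O_{l1}(U_1) × ... × O_{ln}(U_n): a map (f1,...,fn) : U → C^n is C^n-holomorphic if and only if each fi depends only on the variable z_i and equals a holomorphic function of z_i ∈ U_i. -/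
/-!
For `i ≠ j`, the vanishing partial derivative of `f · i` in the `j`-th block makes it constant
along each slice `U j`, since `U j` is open and connected. Moving the coordinates `j ≠ i` one at
a time to those of a base point `z₀` of the box then gives `f z i = f (update z₀ i (z i)) i`.
-/

open Set Metric

open Function

section Combinatorics

variable {ι β : Type*} [DecidableEq ι] {α : ι → Type*} {U : ∀ j, Set (α j)}
  {F : (∀ j, α j) → β} {z z' : ∀ j, α j}

theorem update_mem_univ_pi (hz : z ∈ univ.pi U) {j : ι} {w : α j} (hw : w ∈ U j) :
    update z j w ∈ univ.pi U :=
  (update_mem_pi_iff_of_mem hz).mpr fun _ => hw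

theorem apply_piecewise_eq_of_apply_update_eq {s : Finset ι}
    (hF : ∀ j ∈ s, ∀ z ∈ univ.pi U, ∀ w ∈ U j, F (update z j w) = F z)
    (hz : z ∈ univ.pi U) (hz' : z' ∈ univ.pi U) : F (s.piecewise z' z) = F z := by
  induction s using Finset.induction_on with
  | empty => simp
  | insert j s _ ih =>
    rw [Finset.piecewise_insert,
      hF j (Finset.mem_insert_self j s) _ (s.piecewise_mem_set_pi hz' hz) _ (hz' j trivial)]
    exact ih fun k hk => hF k (Finset.mem_insert_of_mem hk)

theorem apply_eq_apply_update_of_apply_update_eq [Fintype ι] {i : ι}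
    (hF : ∀ j ≠ i, ∀ z ∈ univ.pi U, ∀ w ∈ U j, F (update z j w) = F z)
    (hz : z ∈ univ.pi U) (hz' : z' ∈ univ.pi U) : F z = F (update z' i (z i)) := by
  rw [← Finset.piecewise_erase_univ]
  exact (apply_piecewise_eq_of_apply_update_eq
    (fun j hj => hF j (Finset.ne_of_mem_erase hj)) hz hz').symm

end Combinatorics

theorem ContinuousLinearMap.pi_single_id_apply {R ι : Type*} [Semiring R] [DecidableEq ι]
    {φ : ι → Type*} [∀ j, TopologicalSpace (φ j)] [∀ j, AddCommMonoid (φ j)]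
    [∀ j, Module R (φ j)] (j : ι) (v : φ j) :
    ContinuousLinearMap.pi (Pi.single j (.id R (φ j))) v = Pi.single j v := by
  ext k
  rcases eq_or_ne k j with rfl | hk <;> simp [*]

section Calculus

variable {ι G : Type*} [Fintype ι] [DecidableEq ι] {E : ι → Type*}
  [∀ j, NormedAddCommGroup (E j)] [∀ j, NormedSpace ℂ (E j)]
  [NormedAddCommGroup G] [NormedSpace ℂ G]

theorem apply_update_eq_of_fderiv_single_eq_zero {U : ∀ j, Set (E j)} {F : (∀ j, E j) → G}
    {j : ι} (hUo : IsOpen (U j)) (hUc : IsPreconnected (U j))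
    (hF : ∀ a ∈ univ.pi U, DifferentiableAt ℂ F a)
    (hF' : ∀ a ∈ univ.pi U, ∀ v : E j, fderiv ℂ F a (Pi.single j v) = 0)
    {z : ∀ j, E j} (hz : z ∈ univ.pi U) {w : E j} (hw : w ∈ U j) :
    F (update z j w) = F z := by
  have hslice : ∀ x ∈ U j, HasFDerivAt (F ∘ update z j)
      ((fderiv ℂ F (update z j x)).comp (.pi (Pi.single j (.id ℂ (E j))))) x := fun x hx =>
    (hF (update z j x) (update_mem_univ_pi hz hx)).hasFDerivAt.comp x (hasFDerivAt_update z x)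
  have hzero : EqOn (fderiv ℂ (F ∘ update z j)) 0 (U j) := fun x hx => by
    ext v
    simpa [(hslice x hx).fderiv, ContinuousLinearMap.pi_single_id_apply]
      using hF' _ (update_mem_univ_pi hz hx) v
  calc F (update z j w) = F (update z j (z j)) :=
        hUo.is_const_of_fderiv_eq_zero hUc
          (fun x hx => (hslice x hx).differentiableAt.differentiableWithinAt) hzero hw
          (hz j trivial)
    _ = F z := by rw [update_eq_self]

theorem apply_eq_apply_update_of_fderiv_single_eq_zero {U : ∀ j, Set (E j)}
    {F : (∀ j, E j) → G} {i : ι} (hUo : ∀ j, IsOpen (U j)) (hUc : ∀ j, IsPreconnected (U j))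
    (hF : ∀ a ∈ univ.pi U, DifferentiableAt ℂ F a)
    (hF' : ∀ a ∈ univ.pi U, ∀ j ≠ i, ∀ v : E j, fderiv ℂ F a (Pi.single j v) = 0)
    {z z₀ : ∀ j, E j} (hz : z ∈ univ.pi U) (hz₀ : z₀ ∈ univ.pi U) :
    F z = F (update z₀ i (z i)) :=
  apply_eq_apply_update_of_apply_update_eq (fun j hji _ hz _ hw =>
    apply_update_eq_of_fderiv_single_eq_zero (hUo j) (hUc j) hF
      (fun a ha => hF' a ha j hji) hz hw) hz hz₀

theorem fderiv_comp_apply_single_of_ne {i : ι} {g : E i → G} {a : ∀ j, E j}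
    (hg : DifferentiableAt ℂ g (a i)) {j : ι} (hij : i ≠ j) (v : E j) :
    fderiv ℂ (fun z => g (z i)) a (Pi.single j v) = 0 := by
  have hcomp : HasFDerivAt (fun z => g (z i)) ((fderiv ℂ g (a i)).comp (.proj i)) a :=
    hg.hasFDerivAt.comp a (hasFDerivAt_apply i a)
  rw [hcomp.fderiv]
  simp [Pi.single_eq_of_ne hij]

end Calculus

/-- On a product `U = U 0 × ... × U (n-1)` of nonempty connected open sets, a
map is `ℂⁿ`-holomorphic iff each component depends only on its own block
variable, via a holomorphic function on `U j`. -/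
theorem cnHolo_pi_iff {n : ℕ} {l : Fin n → ℕ}
    (U : ∀ j, Set (Fin (l j) → ℂ))
    (hUo : ∀ j, IsOpen (U j)) (hUc : ∀ j, IsConnected (U j))
    (f : (∀ j, Fin (l j) → ℂ) → (Fin n → ℂ)) :
    CnHolo (Set.univ.pi U) f ↔
      ∃ g : ∀ j, (Fin (l j) → ℂ) → ℂ,
        (∀ j, DifferentiableOn ℂ (g j) (U j)) ∧
        ∀ z ∈ Set.univ.pi U, ∀ i, f z i = g i (z i) := by
  have hUpi : IsOpen (univ.pi U) := isOpen_set_pi finite_univ fun j _ => hUo j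
  constructor
  · rintro ⟨hf, hf'⟩
    have hfi : ∀ i, ∀ a ∈ univ.pi U, DifferentiableAt ℂ (fun z => f z i) a := fun i a ha =>
      differentiableAt_pi.mp (hf.differentiableAt (hUpi.mem_nhds ha)) i
    choose z₀ hz₀ using fun j => (hUc j).nonempty
    replace hz₀ : z₀ ∈ univ.pi U := fun j _ => hz₀ j
    refine ⟨fun i w => f (update z₀ i w) i, fun i w hw => ?_, fun z hz i => ?_⟩
    · exact ((hfi i _ (update_mem_univ_pi hz₀ hw)).comp w
        (hasFDerivAt_update z₀ w).differentiableAt).differentiableWithinAt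
    · exact apply_eq_apply_update_of_fderiv_single_eq_zero hUo (fun j => (hUc j).isPreconnected)
        (hfi i) (fun a ha j hji => hf' a ha i j hji.symm) hz hz₀
  · rintro ⟨g, hg, hfg⟩
    have hgi : ∀ i, ∀ a ∈ univ.pi U, DifferentiableAt ℂ (g i) (a i) := fun i a ha =>
      hg i (a i) (ha i trivial) |>.differentiableAt ((hUo i).mem_nhds (ha i trivial))
    have hfg' : ∀ a ∈ univ.pi U, ∀ i, (fun z => f z i) =ᶠ[nhds a] fun z => g i (z i) :=
      fun a ha i => by
        filter_upwards [hUpi.mem_nhds ha] with z hz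
        exact hfg z hz i
    refine ⟨fun a ha => ?_, fun a ha i j hij v => ?_⟩
    · refine (differentiableAt_pi.mpr fun i => ?_).differentiableWithinAt
      exact ((hgi i a ha).comp a (differentiableAt_apply i a)).congr_of_eventuallyEq
        (hfg' a ha i)
    · rw [(hfg' a ha i).fderiv_eq]
      exact fderiv_comp_apply_single_of_ne (E := fun j => Fin (l j) → ℂ) (hgi i a ha) hij v
end

section
/- Let U_j be nonempty connected open subsets of C^{l_j} for j = 1,...,n, and U := U_1 × ... × U_n. Then U is C^n-holomorphically convex if and only if each U_j is holomorphically convex. -/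
open Set Metric

/-- The ordinary holomorphically convex hull of `K` in `U ⊆ ℂ^m`. -/
def holoHull {m : ℕ} (U K : Set (Fin m → ℂ)) : Set (Fin m → ℂ) :=
  {z ∈ U | ∀ f : (Fin m → ℂ) → ℂ, DifferentiableOn ℂ f U →
    ‖f z‖ ≤ sSup ((fun w => ‖f w‖) '' K)}

/-- `U ⊆ ℂ^m` is holomorphically convex. -/
def IsHoloConvex {m : ℕ} (U : Set (Fin m → ℂ)) : Prop :=
  ∀ K ⊆ U, IsCompact K → IsCompact (holoHull U K)

/-! Both hulls are cut out of the domain by norm inequalities for functions continuous on it, so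
each is compact as soon as it lies in a compact subset of the domain.

`⇐`: for `g` holomorphic on `U j`, the map `w ↦ Pi.single j (g (w j))` is `ℂⁿ`-holomorphic, so the
`ℂⁿ`-hull of `K` lies in the product of the hulls of the projections of `K`.

`⇒`: embed `U j` as the slice `update a j` through a point `a ∈ U`. Along the slice, the `j`-th
component of a `ℂⁿ`-holomorphic map is holomorphic, and every other component has zero derivative,
hence is constant because `U j` is connected. So the slice maps the hull of `K` into the
`ℂⁿ`-hull of the image of `K`, whose preimage under the closed embedding is compact. -/

open Function

section Hull

variable {X F ι : Type*} [TopologicalSpace X] [T2Space X] [NormedAddCommGroup F]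

theorem isCompact_sep_forall_norm_le_of_subset {U C : Set X} {p : ι → Prop} {f : ι → X → F}
    {c : ι → ℝ} (hf : ∀ i, p i → ContinuousOn (f i) U) (hC : IsCompact C) (hCU : C ⊆ U)
    (hsub : {z ∈ U | ∀ i, p i → ‖f i z‖ ≤ c i} ⊆ C) :
    IsCompact {z ∈ U | ∀ i, p i → ‖f i z‖ ≤ c i} := by
  have hclosed : ∀ i, p i → IsClosed (C ∩ f i ⁻¹' closedBall 0 (c i)) := fun i hi =>
    ((hf i hi).mono hCU).preimage_isClosed_of_isClosed hC.isClosed isClosed_closedBall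
  have heq : {z ∈ U | ∀ i, p i → ‖f i z‖ ≤ c i} =
      C ∩ ⋂ i, ⋂ (_ : p i), C ∩ f i ⁻¹' closedBall 0 (c i) := by
    ext z
    simp only [mem_sep_iff, mem_inter_iff, mem_iInter, mem_preimage, mem_closedBall_zero_iff]
    exact ⟨fun hz => ⟨hsub hz, fun i hi => ⟨hsub hz, hz.2 i hi⟩⟩,
      fun hz => ⟨hCU hz.1, fun i hi => (hz.2 i hi).2⟩⟩
  rw [heq]
  exact hC.inter_right (isClosed_iInter fun i => isClosed_iInter (hclosed i))

end Hull

theorem isCompact_cnHull_of_subset {n : ℕ} {l : Fin n → ℕ} {U K C : Set (∀ j, Fin (l j) → ℂ)}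
    (hC : IsCompact C) (hCU : C ⊆ U) (h : cnHull U K ⊆ C) : IsCompact (cnHull U K) :=
  isCompact_sep_forall_norm_le_of_subset (f := id) (fun _ hf => hf.1.continuousOn) hC hCU h

theorem isCompact_holoHull_of_subset {m : ℕ} {U K C : Set (Fin m → ℂ)}
    (hC : IsCompact C) (hCU : C ⊆ U) (h : holoHull U K ⊆ C) : IsCompact (holoHull U K) :=
  isCompact_sep_forall_norm_le_of_subset (f := id) (fun _ hf => hf.continuousOn) hC hCU h

theorem nonempty_of_mem_holoHull {m : ℕ} {U K : Set (Fin m → ℂ)} {z : Fin m → ℂ}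
    (hz : z ∈ holoHull U K) : K.Nonempty := by
  by_contra hK
  have := hz.2 (fun _ => 1) (differentiableOn_const 1)
  norm_num [not_nonempty_iff_eq_empty.1 hK] at this

theorem differentiable_update {𝕜 ι : Type*} [NontriviallyNormedField 𝕜] [Fintype ι]
    [DecidableEq ι] {E : ι → Type*} [∀ i, NormedAddCommGroup (E i)] [∀ i, NormedSpace 𝕜 (E i)]
    (x : ∀ i, E i) (i : ι) : Differentiable 𝕜 (update x i) :=
  fun y => (hasFDerivAt_update x y).differentiableAt

theorem mapsTo_update_univ_pi {ι : Type*} [DecidableEq ι] {α : ι → Type*}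
    {s : ∀ i, Set (α i)} {a : ∀ i, α i} (ha : a ∈ univ.pi s) (i : ι) :
    MapsTo (update a i) (s i) (univ.pi s) :=
  fun _ hx => (update_mem_pi_iff_of_mem ha).2 fun _ => hx

section Product

variable {n : ℕ} {l : Fin n → ℕ} {U : ∀ j, Set (Fin (l j) → ℂ)}

theorem cnHolo_single_comp_eval {j : Fin n} (hUj : IsOpen (U j))
    {g : (Fin (l j) → ℂ) → ℂ} (hg : DifferentiableOn ℂ g (U j)) :
    CnHolo (univ.pi U) (fun w => Pi.single j (g (w j))) := by
  have hmaps : MapsTo (eval j) (univ.pi U) (U j) := fun w hw => hw j (mem_univ j)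
  have hgj : DifferentiableOn ℂ (fun w : ∀ k, Fin (l k) → ℂ => g (w j)) (univ.pi U) :=
    hg.comp (differentiableOn_apply j _) hmaps
  refine ⟨(ContinuousLinearMap.single ℂ (fun _ : Fin n => ℂ) j).differentiable
    |>.comp_differentiableOn hgj, fun a ha i k hik v => ?_⟩
  rcases eq_or_ne i j with rfl | hij
  · have hga : DifferentiableAt ℂ g (a i) :=
      hg.differentiableAt (hUj.mem_nhds (ha i (mem_univ i)))
    simp only [Pi.single_eq_same]
    rw [show (fun z : ∀ k, Fin (l k) → ℂ => g (z i)) = g ∘ eval i from rfl,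
      fderiv_comp a hga (differentiableAt_apply i a), (hasFDerivAt_apply i a).fderiv]
    simp [Pi.single_eq_of_ne hik]
  · simp [Pi.single_eq_of_ne hij]

theorem cnHull_subset_pi_holoHull (hUo : ∀ j, IsOpen (U j)) (K : Set (∀ j, Fin (l j) → ℂ)) :
    cnHull (univ.pi U) K ⊆ univ.pi fun j => holoHull (U j) (eval j '' K) := by
  rintro z ⟨hzU, hz⟩ j -
  refine ⟨hzU j (mem_univ j), fun g hg => ?_⟩
  simpa only [Pi.norm_single, image_image] using hz _ (cnHolo_single_comp_eval (hUo j) hg)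

theorem isCnHoloConvex_univ_pi (hUo : ∀ j, IsOpen (U j)) (h : ∀ j, IsHoloConvex (U j)) :
    IsCnHoloConvex (univ.pi U) := by
  intro K hKU hK
  have hKj : ∀ j, eval j '' K ⊆ U j := by
    rintro j _ ⟨w, hw, rfl⟩
    exact hKU hw j (mem_univ j)
  exact isCompact_cnHull_of_subset
    (isCompact_univ_pi fun j => h j _ (hKj j) (hK.image (continuous_apply j)))
    (pi_mono fun j _ => sep_subset _ _) (cnHull_subset_pi_holoHull hUo K)

theorem CnHolo.apply_update_eq {f : (∀ j, Fin (l j) → ℂ) → (Fin n → ℂ)}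
    (hf : CnHolo (univ.pi U) f) (hUo : ∀ k, IsOpen (U k)) {i j : Fin n} (hij : i ≠ j)
    (hUj : IsPreconnected (U j)) {a : ∀ k, Fin (l k) → ℂ} (ha : a ∈ univ.pi U)
    {x y : Fin (l j) → ℂ} (hx : x ∈ U j) (hy : y ∈ U j) :
    f (update a j x) i = f (update a j y) i := by
  have hmaps := mapsTo_update_univ_pi ha j
  have hfi : DifferentiableOn ℂ (fun w => f w i) (univ.pi U) := differentiableOn_pi.1 hf.1 i
  refine (hUo j).is_const_of_fderiv_eq_zero (𝕜 := ℂ) hUj (f := fun x => f (update a j x) i)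
    (hfi.comp (differentiable_update a j).differentiableOn hmaps) (fun x hx => ?_) hx hy
  have hfix : DifferentiableAt ℂ (fun w => f w i) (update a j x) :=
    hfi.differentiableAt ((isOpen_set_pi finite_univ fun k _ => hUo k).mem_nhds (hmaps hx))
  rw [show (fun x => f (update a j x) i) = (fun w => f w i) ∘ update a j from rfl,
    fderiv_comp x hfix (differentiable_update a j x), fderiv_update]
  ext v
  have hdir : ContinuousLinearMap.pi (Pi.single j (ContinuousLinearMap.id ℂ _)) v =
      (Pi.single j v : ∀ k, Fin (l k) → ℂ) := by
    ext k : 1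
    rcases eq_or_ne k j with rfl | hk <;> simp [*]
  simpa only [ContinuousLinearMap.comp_apply, hdir, Pi.zero_apply, zero_apply]
    using hf.2 _ (hmaps hx) i j hij v

theorem update_mem_cnHull_of_mem_holoHull (hUo : ∀ k, IsOpen (U k)) {j : Fin n}
    (hUj : IsPreconnected (U j)) {a : ∀ k, Fin (l k) → ℂ} (ha : a ∈ univ.pi U)
    {K : Set (Fin (l j) → ℂ)} (hKU : K ⊆ U j) (hK : IsCompact K) {z : Fin (l j) → ℂ}
    (hz : z ∈ holoHull (U j) K) : update a j z ∈ cnHull (univ.pi U) (update a j '' K) := by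
  have hmaps := mapsTo_update_univ_pi ha j
  obtain ⟨w₀, hw₀⟩ := nonempty_of_mem_holoHull hz
  refine ⟨hmaps hz.1, fun f hf => ?_⟩
  set M := sSup ((fun w => ‖f w‖) '' (update a j '' K))
  have hbdd : BddAbove ((fun w => ‖f w‖) '' (update a j '' K)) :=
    ((hK.image (isClosedEmbedding_update a j).continuous).image_of_continuousOn
      (hf.1.continuousOn.mono (hmaps.mono_left hKU).image_subset).norm).bddAbove
  have hle : ∀ w ∈ K, ‖f (update a j w)‖ ≤ M := fun w hw =>
    le_csSup hbdd ⟨_, mem_image_of_mem _ hw, rfl⟩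
  refine (pi_norm_le_iff_of_nonneg ((norm_nonneg _).trans (hle w₀ hw₀))).2 fun i => ?_
  rcases eq_or_ne i j with rfl | hij
  · have hfi : DifferentiableOn ℂ (fun x => f (update a i x) i) (U i) :=
      (differentiableOn_pi.1 hf.1 i).comp (differentiable_update a i).differentiableOn hmaps
    calc ‖f (update a i z) i‖ ≤ sSup ((fun w => ‖f (update a i w) i‖) '' K) := hz.2 _ hfi
      _ ≤ M := csSup_le (⟨_, mem_image_of_mem _ hw₀⟩) <| by
        rintro _ ⟨w, hw, rfl⟩
        exact (norm_le_pi_norm _ i).trans (hle w hw)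
  · calc ‖f (update a j z) i‖ = ‖f (update a j w₀) i‖ := by
          rw [hf.apply_update_eq hUo hij hUj ha hz.1 (hKU hw₀)]
      _ ≤ ‖f (update a j w₀)‖ := norm_le_pi_norm _ i
      _ ≤ M := hle w₀ hw₀

theorem IsCnHoloConvex.isHoloConvex (h : IsCnHoloConvex (univ.pi U))
    (hUo : ∀ k, IsOpen (U k)) (hne : ∀ k, (U k).Nonempty) {j : Fin n}
    (hUj : IsPreconnected (U j)) : IsHoloConvex (U j) := by
  obtain ⟨a, ha⟩ := univ_pi_nonempty_iff.2 hne
  intro K hKU hK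
  have hKU' : update a j '' K ⊆ univ.pi U := ((mapsTo_update_univ_pi ha j).mono_left hKU).image_subset
  refine isCompact_holoHull_of_subset ((isClosedEmbedding_update a j).isCompact_preimage
    (h _ hKU' (hK.image (isClosedEmbedding_update a j).continuous))) ?_
    fun z hz => update_mem_cnHull_of_mem_holoHull hUo hUj ha hKU hK hz
  intro z hz
  simpa using hz.1 j (mem_univ j)

end Product

/-- A product of nonempty connected open sets is `ℂⁿ`-holomorphically convex
iff each factor is holomorphically convex. -/
theorem isCnHoloConvex_pi_iff {n : ℕ} {l : Fin n → ℕ}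
    (U : ∀ j, Set (Fin (l j) → ℂ))
    (hUo : ∀ j, IsOpen (U j)) (hUc : ∀ j, IsConnected (U j)) :
    IsCnHoloConvex (Set.univ.pi U) ↔ ∀ j, IsHoloConvex (U j) :=
  ⟨fun h _ => h.isHoloConvex hUo (fun k => (hUc k).nonempty) (hUc _).isPreconnected,
    isCnHoloConvex_univ_pi hUo⟩
end
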